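/- arXiv:1609.07887 — 2 statements merged into one kernel-verified Lean document; each statement's English description precedes it below -/
import Mathlib

section
/- Different choices of the ilr basis are orthogonal rotations of each other: if z and z~ are the ilr coordinate vectors of the same composition x with respect to two permutations of the parts, then there exists an orthogonal (D-1)×(D-1) matrix R, depending only on the permutations, with z~ = R z for all positive x. -/
/-!
Writing `V` for the ilr contrast matrix of the identity permutation, the ilr coordinates for `σ`
are `z^σ = M_σ (log x)` with `M_σ` the matrix `V` with its columns permuted by `σ`. Each `M_σ` has
orthonormal rows orthogonal to the all-ones vector, so `M_σᵀ M_σ = 1 - J / D` is the orthogonal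
projection onto the sum-zero hyperplane, which contains every row of every `M_τ`. Hence
`R = M_τ M_σᵀ` satisfies `Rᵀ R = 1` and `R M_σ = M_τ`, so `z^τ = R z^σ`.
-/

open Matrix

/-- The ilr coordinates of x with respect to a permutation σ of the parts
(D = n+1, coordinate index i : Fin n). -/
noncomputable def ilrPerm (n : ℕ) (σ : Equiv.Perm (Fin (n + 1)))
    (x : Fin (n + 1) → ℝ) (i : Fin n) : ℝ :=
  Real.sqrt (((n : ℝ) - i) / ((n : ℝ) - i + 1)) *
    Real.log (x (σ i.castSucc) /
      (∏ j ∈ Finset.Ioi i.castSucc, x (σ j)) ^ (1 / ((n : ℝ) - i)))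

open Finset

structure IsOrthonormalContrast {m n : Type*} [DecidableEq m] [Fintype n]
    (V : Matrix m n ℝ) : Prop where
  mul_transpose_self : V * Vᵀ = 1
  mulVec_one : V *ᵥ 1 = 0

namespace IsOrthonormalContrast

variable {m n : Type*} [DecidableEq m] [Fintype n]

theorem submatrix_id_equiv {n' : Type*} [Fintype n'] {V : Matrix m n ℝ}
    (hV : IsOrthonormalContrast V) (e : n' ≃ n) : IsOrthonormalContrast (V.submatrix id e) where
  mul_transpose_self := by
    rw [transpose_submatrix, submatrix_mul_equiv, hV.mul_transpose_self, submatrix_id_id]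
  mulVec_one := by
    rw [submatrix_mulVec_equiv, Pi.one_comp, hV.mulVec_one, Pi.zero_comp]

variable [Fintype m] [DecidableEq n]

/-- Appending the row `(1/√D, …, 1/√D)` to `V` gives a square matrix `W` with `W Wᵀ = 1`, hence
`Wᵀ W = 1`, which reads `Vᵀ V + J / D = 1`. -/
theorem transpose_mul_self {V : Matrix m n ℝ} (hV : IsOrthonormalContrast V)
    (hcard : Fintype.card n = Fintype.card m + 1) :
    Vᵀ * V = 1 - (Fintype.card n : ℝ)⁻¹ • vecMulVec 1 1 := by
  set c : ℝ := √(Fintype.card n : ℝ)⁻¹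
  have hc : c * c = (Fintype.card n : ℝ)⁻¹ := Real.mul_self_sqrt (by positivity)
  set u : Matrix Unit n ℝ := replicateRow Unit (c • 1)
  have hVu : V * uᵀ = 0 := by
    rw [transpose_replicateRow, ← replicateCol_mulVec, mulVec_smul, hV.mulVec_one, smul_zero,
      replicateCol_zero]
  have huu : u * uᵀ = 1 := by
    have hn : (Fintype.card n : ℝ) ≠ 0 := by rw [hcard]; positivity
    ext
    simp [u, dotProduct, ← mul_assoc, hc, hn]
  have hW : fromRows V u * (fromRows V u)ᵀ = 1 := by
    rw [transpose_fromRows, fromRows_mul_fromCols, hV.mul_transpose_self, hVu,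
      ← transpose_transpose (u * Vᵀ), transpose_mul, transpose_transpose, hVu, transpose_zero,
      huu, fromBlocks_one]
  rw [mul_eq_one_comm_of_card_eq _ _ _ (by simp [hcard]), transpose_fromRows,
    fromCols_mul_fromRows, transpose_replicateRow, ← vecMulVec_eq Unit, smul_vecMulVec,
    vecMulVec_smul, smul_smul, hc] at hW
  rw [← hW, add_sub_cancel_right]

theorem transpose_mul_self_mul_transpose {A B : Matrix m n ℝ} (hA : IsOrthonormalContrast A)
    (hB : IsOrthonormalContrast B) (hcard : Fintype.card n = Fintype.card m + 1) :
    Bᵀ * B * Aᵀ = Aᵀ := by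
  rw [hB.transpose_mul_self hcard, Matrix.sub_mul, Matrix.one_mul, Matrix.smul_mul,
    vecMulVec_mul, vecMul_transpose, hA.mulVec_one]
  ext
  simp

theorem mul_transpose_orthogonal {A B : Matrix m n ℝ} (hA : IsOrthonormalContrast A)
    (hB : IsOrthonormalContrast B) (hcard : Fintype.card n = Fintype.card m + 1) :
    (B * Aᵀ)ᵀ * (B * Aᵀ) = 1 := by
  rw [transpose_mul, transpose_transpose, Matrix.mul_assoc, ← Matrix.mul_assoc Bᵀ,
    transpose_mul_self_mul_transpose hA hB hcard, hA.mul_transpose_self]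

theorem mul_transpose_mul {A B : Matrix m n ℝ} (hA : IsOrthonormalContrast A)
    (hB : IsOrthonormalContrast B) (hcard : Fintype.card n = Fintype.card m + 1) :
    B * Aᵀ * A = B := by
  simpa [transpose_mul, Matrix.mul_assoc] using
    congrArg transpose (transpose_mul_self_mul_transpose hB hA hcard)

end IsOrthonormalContrast

theorem Finset.sum_ite_eq_ite_lt_mul {α R : Type*} [Fintype α] [LinearOrder α]
    [LocallyFiniteOrderTop α] [Semiring R] (a : α) (c d : R) (f : α → R) :
    ∑ j, (if j = a then c else if a < j then d else 0) * f j =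
      c * f a + d * ∑ j ∈ Ioi a, f j := by
  have split : ∀ j, (if j = a then c else if a < j then d else 0) * f j =
      (if j = a then c * f j else 0) + (if a < j then d * f j else 0) := by
    intro j
    split_ifs <;> simp_all
  simp only [split, sum_add_distrib, sum_ite_eq', mem_univ, if_true, ← sum_filter, mul_sum]
  congr 2
  ext j
  simp

theorem Fin.sub_cast_val_pos {n : ℕ} (i : Fin n) : 0 < (n : ℝ) - i := by
  have : (i : ℝ) < n := by exact_mod_cast i.isLt
  linarith

theorem Fin.card_Ioi_castSucc {n : ℕ} (i : Fin n) : (#(Ioi i.castSucc) : ℝ) = n - i := by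
  rw [Fin.card_Ioi, Fin.val_castSucc, Nat.add_sub_cancel, Nat.cast_sub i.isLt.le]

noncomputable def ilrCoef (n : ℕ) (i : Fin n) : ℝ :=
  √(((n : ℝ) - i) / ((n : ℝ) - i + 1))

noncomputable def ilrContrast (n : ℕ) : Matrix (Fin n) (Fin (n + 1)) ℝ :=
  Matrix.of fun i j => ilrCoef n i *
    (if j = i.castSucc then 1 else if i.castSucc < j then -(1 / ((n : ℝ) - i)) else 0)

theorem ilrContrast_dotProduct (n : ℕ) (i : Fin n) (f : Fin (n + 1) → ℝ) :
    ilrContrast n i ⬝ᵥ f =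
      ilrCoef n i * (f i.castSucc - 1 / ((n : ℝ) - i) * ∑ j ∈ Ioi i.castSucc, f j) := by
  simp only [dotProduct, ilrContrast, of_apply, mul_assoc, ← mul_sum, sum_ite_eq_ite_lt_mul]
  ring

theorem ilrContrast_dotProduct_one (n : ℕ) (i : Fin n) : ilrContrast n i ⬝ᵥ 1 = 0 := by
  rw [ilrContrast_dotProduct]
  simp only [Pi.one_apply, sum_const, nsmul_eq_mul, mul_one, Fin.card_Ioi_castSucc]
  rw [one_div_mul_cancel (Fin.sub_cast_val_pos i).ne', sub_self, mul_zero]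

theorem ilrContrast_dotProduct_self (n : ℕ) (i : Fin n) :
    ilrContrast n i ⬝ᵥ ilrContrast n i = 1 := by
  have hpos := Fin.sub_cast_val_pos i
  have hsq : ilrCoef n i * ilrCoef n i = ((n : ℝ) - i) / ((n : ℝ) - i + 1) :=
    Real.mul_self_sqrt (div_nonneg hpos.le (by linarith))
  have hdiag : ilrContrast n i i.castSucc = ilrCoef n i := by simp [ilrContrast]
  have htail : ∀ j ∈ Ioi i.castSucc, ilrContrast n i j = ilrCoef n i * -(1 / ((n : ℝ) - i)) := by
    intro j hj
    rw [mem_Ioi] at hj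
    simp [ilrContrast, hj, hj.ne']
  rw [ilrContrast_dotProduct, hdiag, sum_congr rfl htail, sum_const, nsmul_eq_mul,
    Fin.card_Ioi_castSucc]
  field_simp at hsq ⊢
  linear_combination hsq

theorem ilrContrast_dotProduct_of_lt (n : ℕ) {i i' : Fin n} (h : i < i') :
    ilrContrast n i ⬝ᵥ ilrContrast n i' = 0 := by
  have hc : i.castSucc < i'.castSucc := Fin.castSucc_lt_castSucc_iff.mpr h
  have hzero : ∀ j ≤ i.castSucc, ilrContrast n i' j = 0 := fun j hj => by
    have hj' := hj.trans_lt hc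
    simp [ilrContrast, hj'.ne, not_lt.mpr hj'.le]
  have htail : ∑ j ∈ Ioi i.castSucc, ilrContrast n i' j = ilrContrast n i' ⬝ᵥ 1 := by
    rw [dotProduct_one]
    exact sum_subset (subset_univ _) fun j _ hj => hzero j (not_lt.mp (mem_Ioi.not.mp hj))
  rw [ilrContrast_dotProduct, hzero _ le_rfl, htail, ilrContrast_dotProduct_one]
  ring

theorem isOrthonormalContrast_ilrContrast (n : ℕ) : IsOrthonormalContrast (ilrContrast n) where
  mul_transpose_self := by
    ext i i'
    rw [mul_apply', one_apply]
    rcases lt_trichotomy i i' with h | rfl | h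
    · rw [if_neg h.ne]
      exact ilrContrast_dotProduct_of_lt n h
    · rw [if_pos rfl]
      exact ilrContrast_dotProduct_self n i
    · rw [if_neg h.ne', dotProduct_comm]
      exact ilrContrast_dotProduct_of_lt n h
  mulVec_one := funext (ilrContrast_dotProduct_one n)

theorem ilrPerm_eq_mulVec (n : ℕ) (σ : Equiv.Perm (Fin (n + 1))) {x : Fin (n + 1) → ℝ}
    (hx : ∀ j, 0 < x j) :
    (fun i => ilrPerm n σ x i) =
      (ilrContrast n).submatrix id σ.symm *ᵥ fun j => Real.log (x j) := by
  ext i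
  have hprod : 0 < ∏ j ∈ Ioi i.castSucc, x (σ j) := prod_pos fun j _ => hx _
  rw [submatrix_mulVec_equiv, Function.comp_apply, id, mulVec, ilrContrast_dotProduct, ilrPerm,
    ilrCoef, Real.log_div (hx _).ne' (Real.rpow_pos_of_pos hprod _).ne', Real.log_rpow hprod,
    Real.log_prod fun j _ => (hx (σ j)).ne']
  rfl

theorem ilr_bases_orthogonal_rotation_general (n : ℕ)
    (σ τ : Equiv.Perm (Fin (n + 1))) :
    ∃ R : Matrix (Fin n) (Fin n) ℝ, Rᵀ * R = 1 ∧
      ∀ x : Fin (n + 1) → ℝ, (∀ j, 0 < x j) →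
        (fun i => ilrPerm n τ x i) = R *ᵥ (fun i => ilrPerm n σ x i) := by
  have hσ := (isOrthonormalContrast_ilrContrast n).submatrix_id_equiv σ.symm
  have hτ := (isOrthonormalContrast_ilrContrast n).submatrix_id_equiv τ.symm
  have hcard : Fintype.card (Fin (n + 1)) = Fintype.card (Fin n) + 1 := by simp
  refine ⟨_, hσ.mul_transpose_orthogonal hτ hcard, fun x hx => ?_⟩
  rw [ilrPerm_eq_mulVec n σ hx, ilrPerm_eq_mulVec n τ hx, mulVec_mulVec,
    hσ.mul_transpose_mul hτ hcard]

/-- Different choices of the ilr basis (given by permutations of the parts) are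
orthogonal rotations of each other: there is an orthogonal (D-1)×(D-1) matrix R,
depending only on the permutations, with z^τ = R z^σ for every positive x. -/
theorem ilr_bases_orthogonal_rotation (n : ℕ) (hn : 1 ≤ n)
    (σ τ : Equiv.Perm (Fin (n + 1))) :
    ∃ R : Matrix (Fin n) (Fin n) ℝ, Rᵀ * R = 1 ∧
      ∀ x : Fin (n + 1) → ℝ, (∀ j, 0 < x j) →
        (fun i => ilrPerm n τ x i) = R *ᵥ (fun i => ilrPerm n σ x i) :=
  ilr_bases_orthogonal_rotation_general n σ τ
end

section
/- The Euclidean norm of the ilr coordinate vector of x equals the norm of the clr vector: ∑_{i=1}^{D-1} z_i² = ∑_{j=1}^D (ln(x_j) − (1/D)∑_{k=1}^D ln(x_k))². -/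
/-- The i-th ilr coordinate of a positive D-part composition (D = n+1). -/
noncomputable def ilr (n : ℕ) (x : Fin (n + 1) → ℝ) (i : Fin n) : ℝ :=
  Real.sqrt (((n : ℝ) - i) / ((n : ℝ) - i + 1)) *
    Real.log (x i.castSucc /
      (∏ j ∈ Finset.Ioi i.castSucc, x j) ^ (1 / ((n : ℝ) - i)))

/-!
With `y = log x`, the `i`-th ilr coordinate is `√((n-i)/(n-i+1))` times the deviation of `yᵢ`
from the mean of the later `yⱼ`. Prepending a value `y₀` to `m` values with mean `ȳ'` raises
their sum of squared deviations from the mean by exactly `m/(m+1) · (y₀ - ȳ')²` (Steiner's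
translation formula), so peeling off coordinates one at a time gives the identity by induction.
-/

open Finset
open scoped BigOperators

theorem Finset.sum_sub_sq_eq_sum_sub_expect_sq_add {ι : Type*} (s : Finset ι) (f : ι → ℝ) (c : ℝ) :
    ∑ j ∈ s, (f j - c) ^ 2 = ∑ j ∈ s, (f j - 𝔼 k ∈ s, f k) ^ 2 + #s * (𝔼 k ∈ s, f k - c) ^ 2 := by
  set μ := 𝔼 k ∈ s, f k
  calc ∑ j ∈ s, (f j - c) ^ 2
      = ∑ j ∈ s, ((f j - μ) ^ 2 + 2 * (μ - c) * (f j - μ) + (μ - c) ^ 2) :=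
        sum_congr rfl fun _ _ => by ring
    _ = ∑ j ∈ s, (f j - μ) ^ 2 + #s * (μ - c) ^ 2 := by
        rw [sum_add_distrib, sum_add_distrib, ← mul_sum, sum_sub_distrib, ← card_mul_expect s f,
          sum_const, sum_const, nsmul_eq_mul]
        ring

theorem Fin.sum_sq_sub_mean_succ (m : ℕ) (y : Fin (m + 1) → ℝ) :
    ∑ j, (y j - (∑ k, y k) / (m + 1)) ^ 2 =
      ∑ j : Fin m, (y j.succ - (∑ k : Fin m, y k.succ) / m) ^ 2 +
        m / (m + 1) * (y 0 - (∑ k : Fin m, y k.succ) / m) ^ 2 := by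
  have hμ : (∑ k : Fin m, y k.succ) / m = 𝔼 k : Fin m, y k.succ := by
    rw [Fintype.expect_eq_sum_div_card, Fintype.card_fin]
  rw [Fin.sum_univ_succ (f := y), Fin.sum_univ_succ, hμ,
    sum_sub_sq_eq_sum_sub_expect_sq_add univ (fun k => y (Fin.succ k)),
    ← card_mul_expect univ (fun k => y (Fin.succ k)), card_univ, Fintype.card_fin]
  field_simp
  ring

theorem Fin.sum_sq_sub_tail_mean_eq_sum_sq_sub_mean (n : ℕ) (y : Fin (n + 1) → ℝ) :
    ∑ i : Fin n, ((n : ℝ) - i) / ((n : ℝ) - i + 1) *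
        (y i.castSucc - (∑ j ∈ Ioi i.castSucc, y j) / ((n : ℝ) - i)) ^ 2 =
      ∑ j, (y j - (∑ k, y k) / (n + 1)) ^ 2 := by
  induction n with
  | zero => simp
  | succ n ih =>
    rw [Fin.sum_univ_succ, Fin.sum_sq_sub_mean_succ]
    push_cast
    rw [← ih, add_comm]
    simp only [Fin.val_zero, Fin.val_succ, Fin.castSucc_zero, ← Fin.succ_castSucc,
      Fin.sum_Ioi_succ, Fin.sum_Ioi_zero]
    push_cast [add_sub_add_right_eq_sub, sub_zero]
    rfl

theorem ilr_sq (n : ℕ) (x : Fin (n + 1) → ℝ) (hx : ∀ j, 0 < x j) (i : Fin n) :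
    ilr n x i ^ 2 = ((n : ℝ) - i) / ((n : ℝ) - i + 1) *
      (Real.log (x i.castSucc) - (∑ j ∈ Ioi i.castSucc, Real.log (x j)) / ((n : ℝ) - i)) ^ 2 := by
  have hi : (0 : ℝ) < n - i := sub_pos.mpr (by exact_mod_cast i.is_lt)
  have hP : 0 < ∏ j ∈ Ioi i.castSucc, x j := prod_pos fun j _ => hx j
  rw [ilr, mul_pow, Real.sq_sqrt (by positivity), Real.log_div (hx _).ne' (by positivity),
    Real.log_rpow hP, Real.log_prod fun j _ => (hx j).ne', one_div_mul_eq_div]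

theorem ilr_norm_eq_clr_norm_general (n : ℕ) (x : Fin (n + 1) → ℝ)
    (hx : ∀ j, 0 < x j) :
    ∑ i : Fin n, (ilr n x i) ^ 2 =
      ∑ j : Fin (n + 1),
        (Real.log (x j) - (1 / ((n : ℝ) + 1)) * ∑ k, Real.log (x k)) ^ 2 := by
  simp only [ilr_sq n x hx, one_div_mul_eq_div]
  exact Fin.sum_sq_sub_tail_mean_eq_sum_sq_sub_mean n fun j => Real.log (x j)

/-- The squared Euclidean norm of the ilr coordinate vector equals that of the
clr vector: ∑ᵢ zᵢ² = ∑ⱼ (ln xⱼ − (1/D) ∑ₖ ln xₖ)². -/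
theorem ilr_norm_eq_clr_norm (n : ℕ) (hn : 1 ≤ n) (x : Fin (n + 1) → ℝ)
    (hx : ∀ j, 0 < x j) :
    ∑ i : Fin n, (ilr n x i) ^ 2 =
      ∑ j : Fin (n + 1),
        (Real.log (x j) - (1 / ((n : ℝ) + 1)) * ∑ k, Real.log (x k)) ^ 2 :=
  ilr_norm_eq_clr_norm_general n x hx
end
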